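/- arXiv:1908.09793 — 2 statements merged into one kernel-verified Lean document; each statement's English description precedes it below -/
import Mathlib

section
/- The discriminant of the trinomial x^n + a x + b equals (-1)^{n(n-1)/2} (n^n b^{n-1} + (1-n)^{n-1} a^n). -/
open Polynomial Finset

/-! Pairing `θ i - θ j` with `θ j - θ i` turns the discriminant into `(-1) ^ (n choose 2)` times
`∏ i, f'(θ i)`. Since `f' = n (X ^ (n - 1) + a / n)`, exchanging the double product over the `θ i`
and the roots `r` of `X ^ (n - 1) + a / n` gives `∏ i, f'(θ i) = n ^ n ∏ r, f(r)`, and at such `r`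
the trinomial is linear: `f(r) = b + a (1 - 1 / n) r`. A product of linear forms over the roots of
a binomial is read off from the binomial itself. -/

theorem Finset.prod_filter_lt_sub_sq {ι R : Type*} [Fintype ι] [LinearOrder ι] [CommRing R]
    (θ : ι → R) :
    ∏ q ∈ univ.filter (fun q : ι × ι => q.1 < q.2), (θ q.1 - θ q.2) ^ 2 =
      (-1) ^ (Fintype.card ι).choose 2 * ∏ i, ∏ j ∈ univ.erase i, (θ i - θ j) := by
  set L := univ.filter (fun q : ι × ι => q.1 < q.2)
  have hL : #L = (Fintype.card ι).choose 2 := by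
    simpa [← card_univ] using card_product_filter_lt (s := (univ : Finset ι))
  have hsplit : univ.filter (fun q : ι × ι => q.1 ≠ q.2) =
      L ∪ univ.filter (fun q : ι × ι => q.2 < q.1) := by
    ext q; simp [L]
  have hswap : ∏ q ∈ univ.filter (fun q : ι × ι => q.2 < q.1), (θ q.1 - θ q.2) =
      ∏ q ∈ L, (θ q.2 - θ q.1) :=
    prod_equiv (Equiv.prodComm ι ι) (by simp [L]) (by simp)
  have hoff : ∏ i, ∏ j ∈ univ.erase i, (θ i - θ j) =
      (∏ q ∈ L, (θ q.1 - θ q.2)) * ∏ q ∈ L, (θ q.2 - θ q.1) := by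
    rw [← prod_finset_product (univ.filter fun q : ι × ι => q.1 ≠ q.2) univ (univ.erase ·)
      (f := fun q => θ q.1 - θ q.2) (by simp [eq_comm]), hsplit,
      prod_union (disjoint_filter.2 fun q _ h => h.not_gt), hswap]
  have hpair : ∏ i, ∏ j ∈ univ.erase i, (θ i - θ j) =
      (-1) ^ #L * ∏ q ∈ L, (θ q.1 - θ q.2) ^ 2 := by
    rw [hoff, ← prod_const, ← prod_mul_distrib, ← prod_mul_distrib]
    exact prod_congr rfl fun q _ => by ring
  rw [hpair, ← hL, ← mul_assoc, ← pow_add, Even.neg_one_pow ⟨_, rfl⟩, one_mul]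

theorem Finset.prod_multiset_map_sub_comm {ι R : Type*} [CommRing R] (s : Finset ι) (θ : ι → R)
    (t : Multiset R) :
    ∏ i ∈ s, (t.map (θ i - ·)).prod =
      (-1) ^ (#s * Multiset.card t) * (t.map fun r => ∏ i ∈ s, (r - θ i)).prod := by
  have hneg : ∀ i, (t.map (θ i - ·)).prod = (-1) ^ Multiset.card t * (t.map (· - θ i)).prod :=
    fun i => by
      rw [← Multiset.card_map (· - θ i), ← Multiset.prod_map_neg, Multiset.map_map]
      simp
  rw [prod_congr rfl fun i _ => hneg i, prod_mul_distrib, prod_const, ← pow_mul, mul_comm (#s)]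
  congr 1
  exact Multiset.prod_map_prod_map s.val t

namespace Polynomial

variable {K : Type*} [Field K] [IsAlgClosed K]

theorem prod_roots_X_pow_add_C_sub_mul {m : ℕ} (hm : m ≠ 0) (e x y : K) :
    ((X ^ m + C e).roots.map fun r => x - y * r).prod = x ^ m + e * y ^ m := by
  have hcard : Multiset.card (X ^ m + C e).roots = m := by
    rw [IsAlgClosed.card_roots_eq_natDegree, natDegree_X_pow_add_C]
  rcases eq_or_ne y 0 with rfl | hy
  · simp [hcard, zero_pow hm]
  · have hfactor : ∀ r, x - y * r = y * (x / y - r) := fun r => by field_simp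
    rw [Multiset.map_congr rfl fun r _ => hfactor r, Multiset.prod_map_mul, Multiset.map_const',
      Multiset.prod_replicate, hcard, ← (IsAlgClosed.splits _).eval_eq_prod_roots_of_monic
      (monic_X_pow_add_C e hm)]
    simp only [eval_add, eval_pow, eval_X, eval_C, div_pow]
    field_simp

theorem prod_eval_derivative_trinomial {n : ℕ} (hn : 2 ≤ n) (hN : (n : K) ≠ 0) (a b : K)
    (θ : Fin n → K) (h : X ^ n + C a * X + C b = ∏ i, (X - C (θ i))) :
    ∏ i, eval (θ i) (derivative (X ^ n + C a * X + C b)) =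
      (n : K) ^ n * b ^ (n - 1) + (1 - n) ^ (n - 1) * a ^ n := by
  obtain ⟨m, rfl⟩ : ∃ m, n = m + 1 := ⟨n - 1, by omega⟩
  have hm : m ≠ 0 := by omega
  set N : K := ((m + 1 : ℕ) : K)
  set g : K[X] := X ^ m + C (a / N)
  set y : K := a * (1 - N) / N
  have hderiv : derivative (X ^ (m + 1) + C a * X + C b) = C N * g := by
    rw [derivative_add, derivative_add, derivative_X_pow, derivative_C_mul_X, derivative_C,
      mul_add, ← C_mul, mul_div_cancel₀ _ hN, Nat.add_sub_cancel, add_zero]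
  have hroots : ∀ r ∈ g.roots, ∏ i, (r - θ i) = b - y * r := by
    intro r hmem
    have hr : r ^ m = -(a / N) := by
      have := (mem_roots (monic_X_pow_add_C _ hm).ne_zero).1 hmem
      simp only [IsRoot, eval_add, eval_pow, eval_X, eval_C] at this
      linear_combination this
    have hf : ∏ i, (r - θ i) = r * r ^ m + a * r + b := by
      simpa [eval_prod, pow_succ'] using congr_arg (eval r) h.symm
    rw [hf, hr]
    simp only [y]
    field_simp
    ring
  have hparity : (-1 : K) ^ ((m + 1) * m) = 1 := by
    rw [mul_comm]; exact (Nat.even_mul_succ_self m).neg_one_pow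
  calc ∏ i, eval (θ i) (derivative (X ^ (m + 1) + C a * X + C b))
      = ∏ i, N * (g.roots.map (θ i - ·)).prod := by
        simp only [hderiv, eval_mul, eval_C,
          (IsAlgClosed.splits g).eval_eq_prod_roots_of_monic (monic_X_pow_add_C _ hm)]
    _ = N ^ (m + 1) * (g.roots.map fun r => b - y * r).prod := by
        rw [prod_mul_distrib, prod_const, prod_multiset_map_sub_comm, card_univ,
          Fintype.card_fin, IsAlgClosed.card_roots_eq_natDegree, natDegree_X_pow_add_C,
          hparity, one_mul, Multiset.map_congr rfl hroots]
    _ = N ^ (m + 1) * (b ^ m + a / N * y ^ m) := by rw [prod_roots_X_pow_add_C_sub_mul hm]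
    _ = N ^ (m + 1) * b ^ (m + 1 - 1) + (1 - N) ^ (m + 1 - 1) * a ^ (m + 1) := by
        simp only [y, Nat.add_sub_cancel, div_pow, mul_pow]
        field_simp
        ring

end Polynomial

theorem stmt0 (n : ℕ) (hn : 2 ≤ n) (a b : ℤ) (θ : Fin n → ℂ)
    (h : (X ^ n + C (a : ℂ) * X + C (b : ℂ) : ℂ[X]) = ∏ i, (X - C (θ i))) :
    ∏ q ∈ Finset.univ.filter (fun q : Fin n × Fin n => q.1 < q.2), (θ q.1 - θ q.2) ^ 2 =
      (-1) ^ (n * (n - 1) / 2) *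
        ((n : ℂ) ^ n * (b : ℂ) ^ (n - 1) + ((1 : ℂ) - n) ^ (n - 1) * (a : ℂ) ^ n) := by
  have hderiv : ∀ i, eval (θ i) (derivative (X ^ n + C (a : ℂ) * X + C (b : ℂ))) =
      ∏ j ∈ univ.erase i, (θ i - θ j) := fun i => by
    rw [h, ← Lagrange.nodal_eq, Lagrange.eval_nodal_derivative_eval_node_eq (mem_univ i),
      Lagrange.eval_nodal]
  rw [prod_filter_lt_sub_sq, Fintype.card_fin, Nat.choose_two_right, ← prod_congr rfl
    fun i _ => hderiv i, prod_eval_derivative_trinomial hn (Nat.cast_ne_zero.2 (by omega)) _ _ θ h]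
end

section
/- Let p be a prime dividing both integers a and b, with f(x) = x^5 + a x + b irreducible over ℚ and θ a root. Then p divides the index [O_{ℚ(θ)} : ℤ[θ]] if and only if p^2 divides b. -/
open Polynomial NumberField

/-- The index of the order `ℤ[θ]` in the ring of integers of `K`. -/
noncomputable def indexZTheta {K : Type*} [Field K] [NumberField K]
    (θ : NumberField.RingOfIntegers K) : ℕ :=
  (Algebra.adjoin ℤ ({θ} : Set (NumberField.RingOfIntegers K))).toSubring.toAddSubgroup.index

theorem stmt5 (a b : ℤ) (p : ℕ) (hp : p.Prime) (hpa : (p : ℤ) ∣ a) (hpb : (p : ℤ) ∣ b)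
    (f : ℤ[X]) (hf : f = X ^ 5 + C a * X + C b)
    (hirr : Irreducible (f.map (Int.castRingHom ℚ)))
    (K : Type*) [Field K] [NumberField K] (θ : NumberField.RingOfIntegers K)
    (hroot : Polynomial.aeval θ f = 0)
    (hgen : Algebra.adjoin ℚ ({(θ : K)} : Set K) = ⊤) :
    p ∣ indexZTheta θ ↔ (p : ℤ) ^ 2 ∣ b := by
  subst hf
  set F : ℤ[X] := X ^ 5 + C a * C b with hF
  have hmonic : (X ^ 5 + C a * X + C b : ℤ[X]).Monic := by monicity!
  have hdeg : (X ^ 5 + C a * X + C b : ℤ[X]).natDegree = 5 := by compute_degree!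
  set θK : K := algebraMap (𝓞 K) K θ with hθK
  have hint : IsIntegral ℤ θK := θ.isIntegral_coe
  have haevK : Polynomial.aeval θK (X ^ 5 + C a * X + C b : ℤ[X]) = 0 := by
    rw [hθK, Polynomial.aeval_algebraMap_apply, hroot, map_zero]
  have hrootK : θK ^ 5 + a * θK + b = 0 := by
    simpa using haevK
  have hminQ : minpoly ℚ θK = (X ^ 5 + C a * X + C b : ℤ[X]).map (algebraMap ℤ ℚ) := by
    refine (minpoly.eq_of_irreducible_of_monic hirr ?_ (hmonic.map (algebraMap ℤ ℚ))).symm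
    rw [show Int.castRingHom ℚ = algebraMap ℤ ℚ from rfl, Polynomial.aeval_map_algebraMap]
    exact haevK
  have hintO : IsIntegral ℤ θ := IsIntegralClosure.isIntegral ℤ K θ
  have hminZθ : minpoly ℤ θ = X ^ 5 + C a * X + C b := by
    apply Polynomial.map_injective (algebraMap ℤ ℚ) (fun x y h => by exact_mod_cast h)
    rw [← minpoly.isIntegrallyClosed_eq_field_fractions ℚ K hintO, hminQ]
  have hminZ : minpoly ℤ θK = X ^ 5 + C a * X + C b := by
    rw [hθK, minpoly.algebraMap_eq NumberField.RingOfIntegers.coe_injective, hminZθ]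
  haveI : Fact p.Prime := ⟨hp⟩
  have keyne : ∀ w : 𝓞 K, w ∈ Algebra.adjoin ℤ ({θ} : Set (𝓞 K)) → (p : 𝓞 K) * w ≠ θ ^ 4 := by
    intro w hw heq
    rw [Algebra.adjoin_singleton_eq_range_aeval] at hw
    obtain ⟨g, hg'⟩ := hw
    have hg : Polynomial.aeval θ g = w := hg'
    have h0 : Polynomial.aeval θ (X ^ 4 - C (p : ℤ) * g) = 0 := by
      rw [map_sub, map_mul, aeval_C, hg, map_pow, aeval_X]
      rw [show (algebraMap ℤ (𝓞 K)) (p : ℤ) = (p : 𝓞 K) from by push_cast; rfl, heq, sub_self]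
    have hdvd : minpoly ℤ θ ∣ (X ^ 4 - C (p : ℤ) * g) :=
      minpoly.isIntegrallyClosed_dvd hintO h0
    rw [hminZθ] at hdvd
    obtain ⟨q, hq⟩ := hdvd
    have hpz : ((p : ℤ) : ZMod p) = 0 := by
      rw [ZMod.intCast_zmod_eq_zero_iff_dvd]
    have haz : ((a : ℤ) : ZMod p) = 0 := by
      rw [ZMod.intCast_zmod_eq_zero_iff_dvd]; exact_mod_cast hpa
    have hbz : ((b : ℤ) : ZMod p) = 0 := by
      rw [ZMod.intCast_zmod_eq_zero_iff_dvd]; exact_mod_cast hpb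
    have hmap : (X ^ 4 : (ZMod p)[X]) = X ^ 5 * q.map (Int.castRingHom (ZMod p)) := by
      have := congrArg (Polynomial.map (Int.castRingHom (ZMod p))) hq
      simp only [Polynomial.map_sub, Polynomial.map_mul, Polynomial.map_add,
        Polynomial.map_pow, Polynomial.map_X, Polynomial.map_C] at this
      rw [show (Int.castRingHom (ZMod p)) (p : ℤ) = 0 from hpz,
        show (Int.castRingHom (ZMod p)) a = 0 from haz,
        show (Int.castRingHom (ZMod p)) b = 0 from hbz,
        Polynomial.C_0, zero_mul, sub_zero, zero_mul, add_zero, add_zero] at this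
      exact this
    have hq0 : q.map (Int.castRingHom (ZMod p)) ≠ 0 := by
      intro h
      rw [h, mul_zero] at hmap
      exact (pow_ne_zero 4 (Polynomial.X_ne_zero (R := ZMod p))) hmap
    have := congrArg Polynomial.natDegree hmap
    rw [Polynomial.natDegree_X_pow,
      Polynomial.natDegree_mul (pow_ne_zero 5 (Polynomial.X_ne_zero (R := ZMod p))) hq0,
      Polynomial.natDegree_X_pow] at this
    omega
  obtain ⟨a', ha'⟩ := id hpa
  have hp0K : ((p : ℕ) : K) ≠ 0 := Nat.cast_ne_zero.2 hp.ne_zero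
  have dir1 : ((p : ℤ))^2 ∣ b → (p ∣ (Algebra.adjoin ℤ ({θ} : Set (𝓞 K))).toSubring.toAddSubgroup.index) := by
    intro hb2
    obtain ⟨b', hb'⟩ := hb2
    set P : ℤ[X] := X^5 + C (4*a')*X^4 + C (6*a'^2)*X^3 + C (4*a'^3)*X^2 + C (a'^4)*X
      - C ((p:ℤ)^3*b'^4) with hPdef
    have hPmonic : P.Monic := by unfold P; monicity!
    set z : K := θK^4 / (p : K) with hzdef
    have hT : θK * (θK^4 + (p:K)*(a' : ℤ)) = -((p:K)^2*((b' : ℤ) : K)) := by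
      rw [ha', hb'] at hrootK
      push_cast at hrootK ⊢
      linear_combination hrootK
    have hkey : θK^4 * (θK^4 + (p:K)*(a' : ℤ))^4 = (p:K)^8 * ((b' : ℤ) : K)^4 := by
      calc θK^4 * (θK^4 + (p:K)*(a' : ℤ))^4 = (θK * (θK^4 + (p:K)*(a' : ℤ)))^4 := by ring
        _ = (-((p:K)^2*((b' : ℤ) : K)))^4 := by rw [hT]
        _ = (p:K)^8 * ((b' : ℤ) : K)^4 := by ring
    have hz4 : ((p : ℕ) : K) * z = θK ^ 4 := by
      rw [hzdef, mul_div_cancel₀ _ hp0K]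
    have hPz : Polynomial.aeval z P = 0 := by
      rw [hPdef]
      simp only [map_add, map_sub, map_mul, map_pow, aeval_X, aeval_C, eq_intCast, map_intCast, map_ofNat]
      push_cast
      rw [← hz4] at hkey
      apply mul_left_cancel₀ (pow_ne_zero 5 hp0K)
      rw [mul_zero]
      linear_combination hkey
    have hzint : IsIntegral ℤ z := ⟨P, hPmonic, by rw [← Polynomial.aeval_def]; exact hPz⟩
    obtain ⟨y, hy⟩ := IsIntegralClosure.isIntegral_iff (A := 𝓞 K).mp hzint
    have hpy : (p : 𝓞 K) * y = θ ^ 4 := by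
      apply NumberField.RingOfIntegers.coe_injective
      rw [map_mul, map_pow, hy, map_natCast]
      exact hz4
    have hθA : θ ∈ Algebra.adjoin ℤ ({θ} : Set (𝓞 K)) := Algebra.subset_adjoin rfl
    have hyA : y ∉ Algebra.adjoin ℤ ({θ} : Set (𝓞 K)) := fun h => keyne y h hpy
    set H := (Algebra.adjoin ℤ ({θ} : Set (𝓞 K))).toSubring.toAddSubgroup with hHdef
    set x : (𝓞 K) ⧸ H := QuotientAddGroup.mk y with hxdef
    have hx0 : x ≠ 0 := by
      rw [hxdef, Ne, QuotientAddGroup.eq_zero_iff]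
      exact hyA
    have hpx : p • x = 0 := by
      have h1 : p • x = QuotientAddGroup.mk (p • y) := (map_nsmul (QuotientAddGroup.mk' H) p y).symm
      rw [h1, QuotientAddGroup.eq_zero_iff]
      show p • y ∈ Algebra.adjoin ℤ ({θ} : Set (𝓞 K))
      have : p • y = (p : 𝓞 K) * y := by rw [nsmul_eq_mul]
      rw [this, hpy]
      exact pow_mem hθA 4
    have hord : addOrderOf x = p := by
      have h1 : addOrderOf x ∣ p := addOrderOf_dvd_of_nsmul_eq_zero hpx
      rcases (Nat.dvd_prime hp).1 h1 with h | h
      · exact absurd (AddMonoid.addOrderOf_eq_one_iff.1 h) hx0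
      · exact h
    rw [← hord, AddSubgroup.index_eq_card]
    exact addOrderOf_dvd_natCard x
  have hcoe : ∀ w : 𝓞 K, w ∈ Algebra.adjoin ℤ ({θ} : Set (𝓞 K)) ↔
      (algebraMap (𝓞 K) K w) ∈ Algebra.adjoin ℤ ({θK} : Set K) := by
    intro w
    rw [hθK, Algebra.adjoin_singleton_eq_range_aeval, Algebra.adjoin_singleton_eq_range_aeval]
    constructor
    · rintro ⟨g, hg⟩
      refine ⟨g, ?_⟩
      show Polynomial.aeval (algebraMap (𝓞 K) K θ) g = algebraMap (𝓞 K) K w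
      rw [Polynomial.aeval_algebraMap_apply]
      exact congrArg _ hg
    · rintro ⟨g, hg⟩
      refine ⟨g, ?_⟩
      show Polynomial.aeval θ g = w
      apply NumberField.RingOfIntegers.coe_injective
      rw [← Polynomial.aeval_algebraMap_apply]
      exact hg
  have dir2 : p ∣ (Algebra.adjoin ℤ ({θ} : Set (𝓞 K))).toSubring.toAddSubgroup.index →
      ((p : ℤ))^2 ∣ b := by
    intro hdvd
    by_contra hb2
    -- Eisenstein criterion data
    have hpZ : Prime ((p : ℕ) : ℤ) := Nat.prime_iff_prime_int.mp hp
    have hei : (minpoly ℤ θK).IsEisensteinAt (Submodule.span ℤ {((p : ℕ) : ℤ)}) := by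
      rw [hminZ]
      constructor
      · rw [hmonic.leadingCoeff, Ideal.submodule_span_eq, Ideal.mem_span_singleton]
        exact hpZ.not_dvd_one
      · intro n hn
        rw [hdeg] at hn
        rw [Ideal.submodule_span_eq, Ideal.mem_span_singleton]
        interval_cases n <;>
          · simp only [coeff_add, coeff_X_pow, coeff_C_mul, coeff_C, coeff_X]
            norm_num [hpa, hpb]
      · rw [Ideal.submodule_span_eq, Ideal.span_singleton_pow, Ideal.mem_span_singleton]
        intro hcon
        apply hb2
        have : ((X ^ 5 + C a * X + C b : ℤ[X])).coeff 0 = b := by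
          simp [coeff_add, coeff_X_pow, coeff_C]
        rwa [this] at hcon
    -- finiteness of the quotient
    haveI : AddGroup.FG (𝓞 K) := Module.Finite.iff_addGroup_fg.mp inferInstance
    set H := (Algebra.adjoin ℤ ({θ} : Set (𝓞 K))).toSubring.toAddSubgroup with hHdef
    haveI : AddGroup.FG ((𝓞 K) ⧸ H) := AddGroup.fg_of_surjective (QuotientAddGroup.mk'_surjective H)
    have htor : AddMonoid.IsTorsion ((𝓞 K) ⧸ H) := by
      intro x
      obtain ⟨z, rfl⟩ := QuotientAddGroup.mk'_surjective H x
      have hz : (algebraMap (𝓞 K) K z) ∈ Algebra.adjoin ℚ ({(θ : K)} : Set K) := by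
        rw [hgen]; trivial
      rw [Algebra.adjoin_singleton_eq_range_aeval] at hz
      obtain ⟨g, hg'⟩ := hz
      have hg : Polynomial.aeval (θ : K) g = algebraMap (𝓞 K) K z := hg'
      obtain ⟨c, hc⟩ := IsLocalization.integerNormalization_map_to_map (nonZeroDivisors ℤ) g
      have hcz : (c : ℤ) ≠ 0 := nonZeroDivisors.coe_ne_zero c
      have hev : Polynomial.aeval θ (IsLocalization.integerNormalization (nonZeroDivisors ℤ) g)
          = (c : ℤ) • z := by
        apply NumberField.RingOfIntegers.coe_injective
        rw [← Polynomial.aeval_algebraMap_apply]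
        rw [show Polynomial.aeval (algebraMap (𝓞 K) K θ)
            (IsLocalization.integerNormalization (nonZeroDivisors ℤ) g)
          = Polynomial.aeval (algebraMap (𝓞 K) K θ)
            ((IsLocalization.integerNormalization (nonZeroDivisors ℤ) g).map (algebraMap ℤ ℚ))
          from (Polynomial.aeval_map_algebraMap ℚ _ _).symm, hc]
        have hg2 : Polynomial.aeval (algebraMap (𝓞 K) K θ) g = algebraMap (𝓞 K) K z := hg
        rw [← Int.cast_smul_eq_zsmul ℚ, Polynomial.smul_eq_C_mul, map_mul, aeval_C,
          map_intCast, hg2, map_zsmul, zsmul_eq_mul]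
      have : (c : ℤ) • (QuotientAddGroup.mk' H z) = 0 := by
        rw [← map_zsmul (QuotientAddGroup.mk' H) (c : ℤ) z]
        rw [QuotientAddGroup.mk'_apply, QuotientAddGroup.eq_zero_iff]
        show (c : ℤ) • z ∈ Algebra.adjoin ℤ ({θ} : Set (𝓞 K))
        rw [← hev]
        rw [Algebra.adjoin_singleton_eq_range_aeval]
        exact ⟨_, rfl⟩
      exact isOfFinAddOrder_iff_zsmul_eq_zero.mpr ⟨(c : ℤ), hcz, this⟩
    haveI hfin : Finite ((𝓞 K) ⧸ H) := AddCommGroup.finite_of_fg_torsion _ htor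
    haveI : Fintype ((𝓞 K) ⧸ H) := Fintype.ofFinite _
    have hdvd' : p ∣ Fintype.card ((𝓞 K) ⧸ H) := by
      rwa [← Nat.card_eq_fintype_card, ← AddSubgroup.index_eq_card]
    obtain ⟨x, hx⟩ := exists_prime_addOrderOf_dvd_card p hdvd'
    obtain ⟨z, rfl⟩ := QuotientAddGroup.mk'_surjective H x
    have hzA : z ∉ Algebra.adjoin ℤ ({θ} : Set (𝓞 K)) := by
      intro hz
      have : (QuotientAddGroup.mk' H z) = 0 := by
        rw [QuotientAddGroup.mk'_apply, QuotientAddGroup.eq_zero_iff]; exact hz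
      rw [this, addOrderOf_zero] at hx
      exact hp.one_lt.ne' hx.symm
    have hpzA : (p : 𝓞 K) * z ∈ Algebra.adjoin ℤ ({θ} : Set (𝓞 K)) := by
      have h0 : p • (QuotientAddGroup.mk' H z) = 0 := by
        rw [← hx]; exact addOrderOf_nsmul_eq_zero _
      rw [← map_nsmul (QuotientAddGroup.mk' H) p z, QuotientAddGroup.mk'_apply,
        QuotientAddGroup.eq_zero_iff] at h0
      have : p • z = (p : 𝓞 K) * z := nsmul_eq_mul p z
      rwa [this] at h0
    -- power basis
    have hintQ : IsIntegral ℚ θK := hint.tower_top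
    let B : PowerBasis ℚ K := (Algebra.adjoin.powerBasis hintQ).map
      ((Subalgebra.equivOfEq _ _ hgen).trans Subalgebra.topEquiv)
    have hBgen : B.gen = θK := by
      simp [B, PowerBasis.map_gen, Algebra.adjoin.powerBasis_gen]
    have hmem := mem_adjoin_of_smul_prime_smul_of_minpoly_isEisensteinAt
      (B := B) (p := ((p : ℕ) : ℤ)) hpZ (hBgen ▸ hint)
      (z := algebraMap (𝓞 K) K z) (NumberField.RingOfIntegers.isIntegral_coe z) ?_ ?_
    · exact hzA ((hcoe z).mpr hmem)
    · rw [hBgen]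
      have : ((p : ℕ) : ℤ) • (algebraMap (𝓞 K) K z) = algebraMap (𝓞 K) K ((p : 𝓞 K) * z) := by
        rw [map_mul, zsmul_eq_mul]
        push_cast
        rfl
      rw [this]
      exact (hcoe _).mp hpzA
    · rw [hBgen]; exact hei

  exact ⟨fun h => dir2 h, fun h => dir1 h⟩
end
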